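/- arXiv:2505.21433 — 7 statements merged into one kernel-verified Lean document; each statement's English description precedes it below -/
import Mathlib

section
/- Let G = (V,E) be a connected graph and let 𝒮 = {S_1, …, S_g} be a collection of g nonempty terminal sets S_i ⊆ V. Then σ(G,𝒮) ≤ g · τ(G), i.e., the total number of distinct minimal Steiner trees over all terminal sets is at most g times the number of spanning trees of G. -/
open SimpleGraph

/-- A subgraph is a spanning tree if it is a tree containing all vertices. -/
def IsSpanningTree {V : Type*} {G : SimpleGraph V} (T : G.Subgraph) : Prop :=
  T.coe.IsTree ∧ T.IsSpanning

/-- A subgraph is a minimal `S`-Steiner tree if it is a tree containing all of `S`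
whose leaves (vertices of degree 1) all belong to `S`. -/
def IsMinimalSteinerTree {V : Type*} {G : SimpleGraph V} (S : Set V) (T : G.Subgraph) : Prop :=
  T.coe.IsTree ∧ S ⊆ T.verts ∧ ∀ v ∈ T.verts, (T.neighborSet v).ncard = 1 → v ∈ S

/-! Extending a minimal Steiner tree `T` for `S i` to a spanning tree `T'` of `G` gives a map
`(i, T) ↦ (i, T')`, and it is injective because a tree contains at most one minimal `S`-Steiner
subtree when `S` is nonempty. Indeed, if `T₁, T₂ ≤ T'` are two of them and `v ∈ T₁ \ T₂` is as far
as possible from a terminal `s`, then either some `T₁`-neighbour `w` of `v` is farther from `s`, so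
`w ∈ T₂` and the path from `s` to `w` in `T₂`, being the unique one in `T'`, passes through `v`;
or every `T₁`-neighbour of `v` is its parent towards `s`, so `v` is a leaf of `T₁` and a terminal. -/

theorem Set.ncard_le_ncard_of_forall_subsingleton {α β : Type*} {s : Set α} {t : Set β}
    (r : α → β → Prop) (hs : ∀ a ∈ s, ∃ b ∈ t, r a b)
    (ht : ∀ b ∈ t, {a ∈ s | r a b}.Subsingleton) (htf : t.Finite) : s.ncard ≤ t.ncard := by
  obtain rfl | ⟨a₀, ha₀⟩ := s.eq_empty_or_nonempty
  · simp
  have : Nonempty β := ⟨(hs a₀ ha₀).choose⟩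
  choose! f hft hfr using hs
  refine Set.ncard_le_ncard_of_injOn f hft (fun a ha a' ha' he => ?_) htf
  exact ht (f a) (hft a ha) ⟨ha, hfr a ha⟩ ⟨ha', he ▸ hfr a' ha'⟩

namespace SimpleGraph

variable {V : Type*}

section Acyclic

variable {F : SimpleGraph V} {s v w : V}

theorem IsAcyclic.mem_support_of_dist_lt (hF : F.IsAcyclic) {p : F.Walk s v} (hp : p.IsPath)
    (hpd : p.length = F.dist s v) {q : F.Walk s w} (hq : q.IsPath) (hvw : F.Adj v w)
    (hd : F.dist s v < F.dist s w) : v ∈ q.support := by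
  classical
  by_contra hv
  have hw : w ∈ p.support := hF.mem_support_of_ne_mem_support_of_adj_of_isPath hp hq hvw hv
  have := F.dist_le (p.takeUntil w hw)
  have := p.length_takeUntil_le_length hw
  omega

theorem IsAcyclic.eq_penultimate_of_dist_lt (hF : F.IsAcyclic) {p : F.Walk s v} (hp : p.IsPath)
    (hvw : F.Adj v w) (hd : F.dist s w < F.dist s v) : w = p.penultimate := by
  obtain ⟨q, hq, hqd⟩ := (p.reachable.trans hvw.reachable).exists_path_of_dist
  by_cases hv : v ∈ q.support
  · have hlen := congrArg Walk.length (hF.path_concat hp hq hvw hv)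
    rw [Walk.length_concat] at hlen
    have := F.dist_le p
    omega
  · exact hF.eq_penultimate_of_adj_end hp hvw
      (hF.mem_support_of_ne_mem_support_of_adj_of_isPath hp hq hvw hv)

end Acyclic

namespace Subgraph

variable {G : SimpleGraph V} {H : G.Subgraph} {u v x : V}

theorem mem_verts_of_mem_support_spanningCoe {p : H.spanningCoe.Walk u v} (hu : u ∈ H.verts)
    (hx : x ∈ p.support) : x ∈ H.verts := by
  induction p with
  | nil => exact List.mem_singleton.mp hx ▸ hu
  | cons h p ih =>
    rcases List.mem_cons.mp hx with rfl | hx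
    · exact hu
    · exact ih (Adj.snd_mem (H := H) h) hx

theorem isAcyclic_spanningCoe (hH : H.coe.IsAcyclic) : H.spanningCoe.IsAcyclic := by
  intro v c hc
  have hv : v ∈ H.verts := Adj.fst_mem (H := H) (c.adj_snd hc.not_nil)
  -- `H.coe` is definitionally the graph that `H.spanningCoe` induces on `H.verts`
  have hH' : (H.spanningCoe.induce H.verts).IsAcyclic := hH
  refine hH' (c.induce H.verts fun x hx => mem_verts_of_mem_support_spanningCoe hv hx) ?_
  rwa [← Walk.isCycle_map_iff_of_injective (f := (Embedding.induce H.verts).toHom)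
    Subtype.val_injective, Walk.map_induce]

theorem Connected.spanningCoe_reachable (hH : H.Connected) (hu : u ∈ H.verts)
    (hv : v ∈ H.verts) : H.spanningCoe.Reachable u v :=
  (hH.coe ⟨u, hu⟩ ⟨v, hv⟩).map H.coeEmbeddingSpanningCoe.toHom

theorem Connected.adj_of_isAcyclic {F : SimpleGraph V} (hH : H.Connected) (hF : F.IsAcyclic)
    (hle : H.spanningCoe ≤ F) (hu : u ∈ H.verts) (hv : v ∈ H.verts) (huv : F.Adj u v) :
    H.Adj u v := by
  obtain ⟨q, hq⟩ := (hH.spanningCoe_reachable hu hv).exists_isPath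
  have hq' : q.mapLe hle = huv.toWalk :=
    congrArg Subtype.val ((hF.subsingleton_path u v).elim ⟨_, hq.mapLe hle⟩ (Path.singleton huv))
  have hmem : s(u, v) ∈ q.edges := by
    rw [← Walk.edges_mapLe_eq_edges hle, hq']
    simp
  exact q.edges_subset_edgeSet hmem

end Subgraph

end SimpleGraph

section Steiner

variable {V : Type*} {G : SimpleGraph V}

theorem SimpleGraph.Connected.exists_isSpanningTree_le (hG : G.Connected) {H : G.Subgraph}
    (hH : H.coe.IsAcyclic) : ∃ T : G.Subgraph, IsSpanningTree T ∧ H ≤ T := by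
  obtain ⟨F, hHF, hFG, hF⟩ :=
    hG.exists_isTree_le_of_le_of_isAcyclic H.spanningCoe_le (Subgraph.isAcyclic_spanningCoe hH)
  have hspan := toSubgraph.isSpanning F hFG
  refine ⟨toSubgraph F hFG, ⟨?_, hspan⟩, fun _ _ => trivial, fun _ _ h => hHF h⟩
  exact (Subgraph.spanningCoeEquivCoeOfSpanning _ hspan).isTree_iff.mp hF

theorem IsMinimalSteinerTree.verts_subset_of_isAcyclic {S : Set V} {T₁ T₂ : G.Subgraph}
    {F : SimpleGraph V} (hF : F.IsAcyclic) (hS : S.Nonempty) (h₁ : IsMinimalSteinerTree S T₁)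
    (hfin : T₁.verts.Finite) (hle₁ : T₁.spanningCoe ≤ F) (h₂ : T₂.Connected)
    (hS₂ : S ⊆ T₂.verts) (hle₂ : T₂.spanningCoe ≤ F) : T₁.verts ⊆ T₂.verts := by
  obtain ⟨s, hs⟩ := hS
  have conn₁ : T₁.Connected := ⟨h₁.1.connected⟩
  by_contra hsub
  obtain ⟨v, ⟨hv₁, hv₂⟩, hmax⟩ := Set.exists_max_image (T₁.verts \ T₂.verts) (F.dist s)
    hfin.sdiff (Set.sdiff_nonempty.mpr hsub)
  have hreach : F.Reachable s v := (conn₁.spanningCoe_reachable (h₁.2.1 hs) hv₁).mono hle₁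
  by_cases hfar : ∃ w, T₁.Adj v w ∧ F.dist s v < F.dist s w
  · obtain ⟨w, hvw, hd⟩ := hfar
    have hw₂ : w ∈ T₂.verts := by
      by_contra hw₂
      exact (hmax w ⟨hvw.snd_mem, hw₂⟩).not_gt hd
    obtain ⟨p, hp, hpd⟩ := hreach.exists_path_of_dist
    obtain ⟨q, hq⟩ := (h₂.spanningCoe_reachable (hS₂ hs) hw₂).exists_isPath
    have hvq := hF.mem_support_of_dist_lt hp hpd (hq.mapLe hle₂) (hle₁ hvw) hd
    rw [Walk.support_mapLe_eq_support] at hvq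
    exact hv₂ (Subgraph.mem_verts_of_mem_support_spanningCoe (hS₂ hs) hvq)
  · push Not at hfar
    obtain ⟨p, hp⟩ := hreach.exists_isPath
    have hleaf : T₁.neighborSet v = {p.penultimate} := by
      obtain ⟨c⟩ := conn₁.spanningCoe_reachable hv₁ (h₁.2.1 hs)
      have hvs : v ≠ s := fun h => hv₂ (h ▸ hS₂ hs)
      refine (Set.Nonempty.subset_singleton_iff ⟨_, c.adj_snd (Walk.not_nil_of_ne hvs)⟩).mp
        fun w hw => hF.eq_penultimate_of_dist_lt hp (hle₁ hw) ?_
      exact (hfar w hw).lt_of_ne (hF.dist_ne_of_adj (hle₁ hw) hreach).symm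
    exact hv₂ (hS₂ (h₁.2.2 v hv₁ (by rw [hleaf, Set.ncard_singleton])))

theorem IsMinimalSteinerTree.le_of_isAcyclic {S : Set V} {T₁ T₂ : G.Subgraph}
    {F : SimpleGraph V} (hF : F.IsAcyclic) (hS : S.Nonempty) (h₁ : IsMinimalSteinerTree S T₁)
    (hfin : T₁.verts.Finite) (hle₁ : T₁.spanningCoe ≤ F) (h₂ : T₂.Connected)
    (hS₂ : S ⊆ T₂.verts) (hle₂ : T₂.spanningCoe ≤ F) : T₁ ≤ T₂ := by
  have hverts := h₁.verts_subset_of_isAcyclic hF hS hfin hle₁ h₂ hS₂ hle₂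
  refine ⟨hverts, fun u v huv => ?_⟩
  exact h₂.adj_of_isAcyclic hF hle₂ (hverts huv.fst_mem) (hverts huv.snd_mem) (hle₁ huv)

theorem IsMinimalSteinerTree.eq_of_le_of_isAcyclic [Finite V] {S : Set V}
    {T₁ T₂ T : G.Subgraph} (hT : T.coe.IsAcyclic) (hS : S.Nonempty)
    (h₁ : IsMinimalSteinerTree S T₁) (h₂ : IsMinimalSteinerTree S T₂) (hle₁ : T₁ ≤ T)
    (hle₂ : T₂ ≤ T) : T₁ = T₂ := by
  have hF := Subgraph.isAcyclic_spanningCoe hT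
  have hle₁' := Subgraph.spanningCoe_le_of_le hle₁
  have hle₂' := Subgraph.spanningCoe_le_of_le hle₂
  exact le_antisymm
    (h₁.le_of_isAcyclic hF hS (Set.toFinite _) hle₁' ⟨h₂.1.connected⟩ h₂.2.1 hle₂')
    (h₂.le_of_isAcyclic hF hS (Set.toFinite _) hle₂' ⟨h₁.1.connected⟩ h₁.2.1 hle₁')

end Steiner

/-- `σ(G, 𝒮) ≤ g · τ(G)`: the number of pairs `(i, T)` where `T` is a minimal
`S i`-Steiner tree is at most `g` times the number of spanning trees of `G`. -/
theorem stmt1 {V : Type*} [Fintype V] (G : SimpleGraph V) (hG : G.Connected)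
    (g : ℕ) (S : Fin g → Set V) (hS : ∀ i, (S i).Nonempty) :
    {p : Fin g × G.Subgraph | IsMinimalSteinerTree (S p.1) p.2}.ncard
      ≤ g * {T : G.Subgraph | IsSpanningTree T}.ncard := by
  calc {p : Fin g × G.Subgraph | IsMinimalSteinerTree (S p.1) p.2}.ncard
      ≤ (Set.univ ×ˢ {T : G.Subgraph | IsSpanningTree T}).ncard := by
        refine Set.ncard_le_ncard_of_forall_subsingleton (fun p q => p.1 = q.1 ∧ p.2 ≤ q.2)
          ?_ ?_ (Set.toFinite _)
        · rintro ⟨i, T⟩ hT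
          obtain ⟨T', hT', hle⟩ := hG.exists_isSpanningTree_le hT.1.isAcyclic
          exact ⟨(i, T'), ⟨trivial, hT'⟩, rfl, hle⟩
        · rintro ⟨i, T⟩ ⟨-, hT⟩ ⟨i₁, T₁⟩ ⟨h₁, hi₁, hle₁⟩ ⟨i₂, T₂⟩ ⟨h₂, hi₂, hle₂⟩
          simp only at hi₁ hi₂
          subst hi₁ hi₂
          exact Prod.ext rfl
            (IsMinimalSteinerTree.eq_of_le_of_isAcyclic hT.1.isAcyclic (hS _) h₁ h₂ hle₁ hle₂)
    _ = g * {T : G.Subgraph | IsSpanningTree T}.ncard := by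
        rw [Set.ncard_prod, Set.ncard_univ, Nat.card_fin]
end

section
/- Let G = (V,E) be a connected graph and let S ⊆ V be a nonempty set of terminal vertices. Then the number of distinct minimal S-Steiner trees in G is at most τ(G), the number of spanning trees of G. -/
/-!
Fix a terminal `r ∈ S`. In a minimal `S`-Steiner tree every vertex lies on a path from `r` to
another terminal: extend a path from `r` through the vertex as far as possible; its far end is
then a leaf, hence a terminal. Consequently, inside a forest the minimal `S`-Steiner subtree is
unique, being determined by the (unique) paths between terminals. Extending each minimal Steiner
tree to a spanning tree of `G` is therefore injective.
-/

open SimpleGraph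

namespace SimpleGraph
variable {V : Type*} {G : SimpleGraph V}

theorem IsAcyclic.of_induce {s : Set V} (hs : ∀ ⦃u v⦄, G.Adj u v → u ∈ s)
    (h : (G.induce s).IsAcyclic) : G.IsAcyclic := by
  intro v c hc
  have hsupp : ∀ x ∈ c.support, x ∈ s := fun x hx => by
    obtain ⟨e, he, hxe⟩ := (c.mem_support_iff_exists_mem_edges_of_not_nil hc.not_nil).mp hx
    obtain ⟨y, rfl⟩ := Sym2.mem_iff_exists.mp hxe
    exact hs (c.adj_of_mem_edges he)
  refine h (c.induce s hsupp) ?_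
  rwa [← Walk.isCycle_map_iff_of_injective (f := (Embedding.induce s).toHom) Subtype.val_injective,
    Walk.map_induce]

theorem Subgraph.isAcyclic_spanningCoe_s2 {H : G.Subgraph} (h : H.coe.IsAcyclic) :
    H.spanningCoe.IsAcyclic :=
  IsAcyclic.of_induce (fun _ _ hadj => H.edge_vert hadj) h

theorem Connected.exists_isSpanningTree_ge (hG : G.Connected) {H : G.Subgraph}
    (hH : H.coe.IsAcyclic) : ∃ T : G.Subgraph, H ≤ T ∧ IsSpanningTree T := by
  obtain ⟨F, hHF, hFG, hF⟩ :=
    hG.exists_isTree_le_of_le_of_isAcyclic H.spanningCoe_le (Subgraph.isAcyclic_spanningCoe_s2 hH)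
  refine ⟨toSubgraph F hFG, ⟨Set.subset_univ _, fun _ _ hadj => hHF hadj⟩, ?_, ?_⟩
  · exact (Subgraph.spanningCoeEquivCoeOfSpanning _ (toSubgraph.isSpanning F hFG)).isTree_iff.mp hF
  · exact toSubgraph.isSpanning F hFG

theorem IsAcyclic.exists_isPath_through_of_leaves_mem [Finite V] (hG : G.IsAcyclic) {A : Set V}
    (hA : ∀ u, (G.neighborSet u).ncard = 1 → u ∈ A) {r v : V} (hr : r ∈ A)
    (hrv : G.Reachable r v) : ∃ a ∈ A, ∃ p : G.Walk r a, p.IsPath ∧ v ∈ p.support := by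
  have := Fintype.ofFinite V
  by_contra! hno
  -- otherwise every path from `r` through `v` extends by one edge at its far end
  suffices ∀ n, ∃ a, ∃ p : G.Walk r a, p.IsPath ∧ v ∈ p.support ∧ n ≤ p.length by
    obtain ⟨a, p, hp, -, hlen⟩ := this (Fintype.card V)
    exact hlen.not_gt hp.length_lt
  intro n
  induction n with
  | zero =>
    obtain ⟨p, hp⟩ := hrv.exists_isPath
    exact ⟨v, p, hp, p.end_mem_support, Nat.zero_le _⟩
  | succ n ih =>
    obtain ⟨a, p, hp, hv, hlen⟩ := ih
    have ha : a ∉ A := fun ha => hno a ha p hp hv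
    have hnil : ¬ p.Nil := fun hnil => ha (hnil.eq ▸ hr)
    obtain ⟨w, hw, hwp⟩ : ∃ w, G.Adj a w ∧ w ≠ p.penultimate := by
      by_contra! hall
      refine ha (hA a ((Set.ncard_eq_one).mpr ⟨p.penultimate, ?_⟩))
      exact Set.eq_singleton_iff_unique_mem.mpr ⟨(p.adj_penultimate hnil).symm, hall⟩
    have hwp' : w ∉ p.support := fun hw' => hwp (hG.eq_penultimate_of_adj_end hp hw hw')
    exact ⟨w, p.concat hw, hp.concat hwp' hw, p.support_subset_support_concat hw hv,
      by rw [Walk.length_concat]; omega⟩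

namespace Subgraph
variable {T H₁ H₂ : G.Subgraph}

theorem support_map_val_eq_of_isPath (hT : T.coe.IsAcyclic) (h₁ : H₁ ≤ T) (h₂ : H₂ ≤ T)
    {u v : V} {hu₁ : u ∈ H₁.verts} {hv₁ : v ∈ H₁.verts} {hu₂ : u ∈ H₂.verts} {hv₂ : v ∈ H₂.verts}
    {p : H₁.coe.Walk ⟨u, hu₁⟩ ⟨v, hv₁⟩} {q : H₂.coe.Walk ⟨u, hu₂⟩ ⟨v, hv₂⟩}
    (hp : p.IsPath) (hq : q.IsPath) :
    p.support.map Subtype.val = q.support.map Subtype.val := by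
  calc p.support.map Subtype.val
      = (p.map (inclusion h₁)).support.map Subtype.val := by
        rw [Walk.support_map, List.map_map]; rfl
    _ = (q.map (inclusion h₂)).support.map Subtype.val :=
        congrArg (fun w => w.support.map Subtype.val) <| congrArg Subtype.val <|
          (hT.subsingleton_path _ _).elim
            ⟨p.map (inclusion h₁), hp.map (inclusion.injective h₁)⟩
            ⟨q.map (inclusion h₂), hq.map (inclusion.injective h₂)⟩
    _ = q.support.map Subtype.val := by
        rw [Walk.support_map, List.map_map]; rfl

theorem le_of_verts_subset (hT : T.coe.IsAcyclic) (h₁ : H₁ ≤ T) (h₂ : H₂ ≤ T)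
    (hH₂ : H₂.coe.Preconnected) (hV : H₁.verts ⊆ H₂.verts) : H₁ ≤ H₂ := by
  refine ⟨hV, fun u v huv => ?_⟩
  obtain ⟨q, hq⟩ := (hH₂ ⟨u, hV (H₁.edge_vert huv)⟩ ⟨v, hV (H₁.edge_vert huv.symm)⟩).exists_isPath
  have hadj : H₁.coe.Adj ⟨u, H₁.edge_vert huv⟩ ⟨v, H₁.edge_vert huv.symm⟩ := huv
  have hlen := congrArg List.length
    (support_map_val_eq_of_isPath hT h₁ h₂ (Path.singleton hadj).property hq)
  simp only [Path.singleton_coe, Walk.support_cons, Walk.support_nil, List.length_map,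
    Walk.length_support, List.length_cons, List.length_nil] at hlen
  exact q.adj_of_length_eq_one (by omega)

end Subgraph

end SimpleGraph

namespace IsMinimalSteinerTree
variable {V : Type*} {G : SimpleGraph V} {S : Set V} {T H₁ H₂ : G.Subgraph}

theorem exists_isPath_through [Finite V] (hT : IsMinimalSteinerTree S T) {r v : V}
    (hr : r ∈ S) (hv : v ∈ T.verts) :
    ∃ a, ∃ ha : a ∈ S, ∃ p : T.coe.Walk ⟨r, hT.2.1 hr⟩ ⟨a, hT.2.1 ha⟩,
      p.IsPath ∧ ⟨v, hv⟩ ∈ p.support := by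
  have hleaf : ∀ u : T.verts, (T.coe.neighborSet u).ncard = 1 → u ∈ Subtype.val ⁻¹' S := by
    intro u hu
    refine hT.2.2 u u.2 ?_
    rwa [← Nat.card_coe_set_eq, ← Nat.card_congr (Subgraph.coeNeighborSetEquiv u),
      Nat.card_coe_set_eq]
  obtain ⟨⟨a, haT⟩, ha, p, hp, hvp⟩ := hT.1.isAcyclic.exists_isPath_through_of_leaves_mem hleaf
    (r := ⟨r, hT.2.1 hr⟩) hr (hT.1.connected.preconnected _ ⟨v, hv⟩)
  exact ⟨a, ha, p, hp, hvp⟩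

theorem verts_subset [Finite V] (hT : T.coe.IsAcyclic) (h₁ : H₁ ≤ T) (h₂ : H₂ ≤ T)
    (hH₁ : IsMinimalSteinerTree S H₁) (hH₂ : H₂.coe.Preconnected) (hS₂ : S ⊆ H₂.verts)
    {r : V} (hr : r ∈ S) : H₁.verts ⊆ H₂.verts := by
  intro v hv
  obtain ⟨a, ha, p, hp, hvp⟩ := hH₁.exists_isPath_through hr hv
  obtain ⟨q, hq⟩ := (hH₂ ⟨r, hS₂ hr⟩ ⟨a, hS₂ ha⟩).exists_isPath
  have hv' : v ∈ q.support.map Subtype.val :=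
    Subgraph.support_map_val_eq_of_isPath hT h₁ h₂ hp hq ▸ List.mem_map_of_mem hvp
  obtain ⟨z, -, rfl⟩ := List.mem_map.mp hv'
  exact z.2

theorem eq_of_le_of_isAcyclic_s2 [Finite V] (hS : S.Nonempty) (hT : T.coe.IsAcyclic)
    (h₁ : H₁ ≤ T) (h₂ : H₂ ≤ T) (hH₁ : IsMinimalSteinerTree S H₁)
    (hH₂ : IsMinimalSteinerTree S H₂) : H₁ = H₂ := by
  obtain ⟨r, hr⟩ := hS
  have hle : ∀ {H H' : G.Subgraph}, H ≤ T → H' ≤ T → IsMinimalSteinerTree S H →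
      IsMinimalSteinerTree S H' → H ≤ H' := fun h h' hH hH' =>
    Subgraph.le_of_verts_subset hT h h' hH'.1.connected.preconnected
      (hH.verts_subset hT h h' hH'.1.connected.preconnected hH'.2.1 hr)
  exact le_antisymm (hle h₁ h₂ hH₁ hH₂) (hle h₂ h₁ hH₂ hH₁)

end IsMinimalSteinerTree

/-- The number of distinct minimal `S`-Steiner trees in `G` is at most `τ(G)`,
the number of spanning trees of `G`. -/
theorem stmt2 {V : Type*} [Fintype V] (G : SimpleGraph V) (hG : G.Connected)
    (S : Set V) (hS : S.Nonempty) :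
    {T : G.Subgraph | IsMinimalSteinerTree S T}.ncard
      ≤ {T : G.Subgraph | IsSpanningTree T}.ncard := by
  choose! f hf using fun T (hT : IsMinimalSteinerTree S T) =>
    hG.exists_isSpanningTree_ge hT.1.isAcyclic
  refine Set.ncard_le_ncard_of_injOn f (fun T hT => (hf T hT).2) fun T₁ h₁ T₂ h₂ heq => ?_
  exact IsMinimalSteinerTree.eq_of_le_of_isAcyclic_s2 hS (hf T₂ h₂).2.1.isAcyclic
    (heq ▸ (hf T₁ h₁).1) (hf T₂ h₂).1 h₁ h₂
end

section
/- Let Z_1, …, Z_n be independent Bernoulli random variables with parameters p_1, …, p_n ∈ [0,1], let Y = Σ_{i=1}^n Z_i and μ = 𝔼[Y] = Σ_{i=1}^n p_i. Let r ≥ 2 be an integer and let 0 < α ≤ 1/4, and suppose μ ≥ (r − 1)/α. Then ℙ(Y ≤ r − 2) ≤ e^4 · exp(−1/(2α)). -/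
open MeasureTheory ProbabilityTheory Real Finset

/-!
Chernoff's bound at `t = -log 2`. Each indicator has moment generating function
`1 + q (e^t - 1) ≤ exp (q (e^t - 1))`, so by independence
`ℙ(Y ≤ r - 2) ≤ 2^(r-2) · exp (-μ/2)`. Since `μ/2 ≥ (r - 1)/(2α)` and `1/(2α) ≥ 2 > log 2`,
this is at most `exp (-1/(2α))`.
-/

namespace ProbabilityTheory

variable {Ω ι : Type*} [MeasurableSpace Ω] {μ : Measure Ω} [IsProbabilityMeasure μ]

lemma measurable_bool_indicator {Z : Ω → Bool} (hZ : Measurable Z) :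
    Measurable fun ω => if Z ω = true then (1 : ℝ) else 0 :=
  Measurable.ite (hZ (measurableSet_singleton true)) measurable_const measurable_const

lemma mgf_bool_indicator {Z : Ω → Bool} (hZ : Measurable Z) (t : ℝ) :
    mgf (fun ω => if Z ω = true then (1 : ℝ) else 0) μ t
      = 1 + μ.real {ω | Z ω = true} * (exp t - 1) := by
  have hs : MeasurableSet {ω | Z ω = true} := hZ (measurableSet_singleton true)
  have hexp : (fun ω => exp (t * if Z ω = true then (1 : ℝ) else 0))
      = fun ω => 1 + {ω | Z ω = true}.indicator (fun _ => exp t - 1) ω := by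
    funext ω
    by_cases h : Z ω = true <;> simp [h]
  rw [mgf, hexp, integral_add (integrable_const _) ((integrable_const _).indicator hs),
    integral_indicator_const _ hs, integral_const]
  simp [smul_eq_mul]

lemma mgf_bool_indicator_le {Z : Ω → Bool} (hZ : Measurable Z) (t : ℝ) :
    mgf (fun ω => if Z ω = true then (1 : ℝ) else 0) μ t
      ≤ exp (μ.real {ω | Z ω = true} * (exp t - 1)) := by
  rw [mgf_bool_indicator hZ]
  linarith [add_one_le_exp (μ.real {ω | Z ω = true} * (exp t - 1))]

lemma mgf_sum_bool_indicator_le {Z : ι → Ω → Bool} (hZ : ∀ i, Measurable (Z i))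
    (hindep : iIndepFun Z μ) (s : Finset ι) (t : ℝ) :
    mgf (∑ i ∈ s, fun ω => if Z i ω = true then (1 : ℝ) else 0) μ t
      ≤ exp ((∑ i ∈ s, μ.real {ω | Z i ω = true}) * (exp t - 1)) := by
  have hX : iIndepFun (fun i ω => if Z i ω = true then (1 : ℝ) else 0) μ :=
    hindep.comp (fun _ b => if b = true then (1 : ℝ) else 0) (fun _ => Measurable.of_discrete)
  rw [hX.mgf_sum (fun i => measurable_bool_indicator (hZ i)), sum_mul, exp_sum]
  exact prod_le_prod (fun _ _ => mgf_nonneg) (fun i _ => mgf_bool_indicator_le (hZ i) t)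

lemma measureReal_sum_bool_indicator_le_le [Fintype ι] {Z : ι → Ω → Bool}
    (hZ : ∀ i, Measurable (Z i)) (hindep : iIndepFun Z μ) (a : ℝ) {t : ℝ} (ht : t ≤ 0) :
    μ.real {ω | ∑ i, (if Z i ω = true then (1 : ℝ) else 0) ≤ a}
      ≤ exp (-t * a + (∑ i, μ.real {ω | Z i ω = true}) * (exp t - 1)) := by
  set X : ι → Ω → ℝ := fun i ω => if Z i ω = true then (1 : ℝ) else 0
  have hXmeas : AEMeasurable (∑ i, X i) μ :=
    Finset.aemeasurable_sum univ fun i _ => (measurable_bool_indicator (hZ i)).aemeasurable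
  have hXrange : ∀ ω, (∑ i, X i) ω ∈ Set.Icc (0 : ℝ) (Fintype.card ι) := by
    intro ω
    have hXi : ∀ i, X i ω ∈ Set.Icc (0 : ℝ) 1 := fun i => by
      by_cases h : Z i ω = true <;> simp [X, h]
    rw [Finset.sum_apply]
    refine ⟨sum_nonneg fun i _ => (hXi i).1, ?_⟩
    simpa using sum_le_sum fun i (_ : i ∈ univ) => (hXi i).2
  have hchernoff := measure_le_le_exp_mul_mgf a ht
    (integrable_exp_mul_of_mem_Icc hXmeas (ae_of_all μ hXrange))
  simp only [Finset.sum_apply] at hchernoff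
  refine hchernoff.trans ?_
  rw [exp_add]
  exact mul_le_mul_of_nonneg_left (mgf_sum_bool_indicator_le hZ hindep univ t) (exp_pos _).le

end ProbabilityTheory

lemma log_two_mul_sub_half_le {r α S : ℝ} (hr : 2 ≤ r) (hα : 0 < α) (hα4 : α ≤ 1 / 4)
    (hS : (r - 1) / α ≤ S) :
    log 2 * (r - 2) - S / 2 ≤ -(1 / (2 * α)) := by
  have hlog2 : log 2 ≤ 2 := by linarith [log_le_sub_one_of_pos (two_pos (α := ℝ))]
  have hinv : 2 ≤ 1 / (2 * α) := by rw [le_div_iff₀ (by linarith)]; linarith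
  have hsplit : (r - 1) / α / 2 = (r - 2) * (1 / (2 * α)) + 1 / (2 * α) := by
    field_simp; ring
  nlinarith [mul_le_mul_of_nonneg_left (hlog2.trans hinv) (by linarith : (0 : ℝ) ≤ r - 2)]

theorem stmt7_general {Ω : Type*} [MeasurableSpace Ω]
    (μ : Measure Ω) [IsProbabilityMeasure μ]
    (n : ℕ) (p : Fin n → ℝ)
    (Z : Fin n → Ω → Bool)
    (hZmeas : ∀ i, Measurable (Z i))
    (hZindep : iIndepFun Z μ)
    (hZprob : ∀ i, (μ {ω | Z i ω = true}).toReal = p i)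
    (r : ℕ) (hr : 2 ≤ r) (α : ℝ) (hα : 0 < α) (hα4 : α ≤ 1 / 4)
    (hmean : ((r : ℝ) - 1) / α ≤ ∑ i, p i) :
    (μ {ω | (∑ i, if Z i ω = true then (1 : ℝ) else 0) ≤ (r : ℝ) - 2}).toReal
      ≤ exp 4 * exp (-(1 / (2 * α))) := by
  have hsum : ∑ i, μ.real {ω | Z i ω = true} = ∑ i, p i := sum_congr rfl fun i _ => hZprob i
  have hr' : (2 : ℝ) ≤ r := by exact_mod_cast hr
  calc (μ {ω | (∑ i, if Z i ω = true then (1 : ℝ) else 0) ≤ (r : ℝ) - 2}).toReal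
      ≤ exp (-(-log 2) * ((r : ℝ) - 2) + (∑ i, p i) * (exp (-log 2) - 1)) := by
        rw [← hsum]
        exact measureReal_sum_bool_indicator_le_le hZmeas hZindep _
          (neg_nonpos.2 (log_nonneg one_le_two))
    _ = exp (log 2 * ((r : ℝ) - 2) - (∑ i, p i) / 2) := by
        rw [exp_neg, exp_log two_pos]
        ring_nf
    _ ≤ exp (-(1 / (2 * α))) := exp_le_exp.2 (log_two_mul_sub_half_le hr' hα hα4 hmean)
    _ ≤ exp 4 * exp (-(1 / (2 * α))) :=
        le_mul_of_one_le_left (exp_pos _).le (one_le_exp (by norm_num))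

/-- Chernoff-type bound: for independent Bernoulli variables `Z_1, …, Z_n` with
parameters `p_i`, sum `Y`, mean `μY = Σ p_i ≥ (r - 1)/α` with `r ≥ 2` an integer and
`0 < α ≤ 1/4`, we have `ℙ(Y ≤ r - 2) ≤ e^4 · exp (-1/(2α))`. -/
theorem stmt7 {Ω : Type*} [MeasurableSpace Ω]
    (μ : Measure Ω) [IsProbabilityMeasure μ]
    (n : ℕ) (p : Fin n → ℝ) (hp0 : ∀ i, 0 ≤ p i) (hp1 : ∀ i, p i ≤ 1)
    (Z : Fin n → Ω → Bool)
    (hZmeas : ∀ i, Measurable (Z i))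
    (hZindep : iIndepFun Z μ)
    (hZprob : ∀ i, (μ {ω | Z i ω = true}).toReal = p i)
    (r : ℕ) (hr : 2 ≤ r) (α : ℝ) (hα : 0 < α) (hα4 : α ≤ 1 / 4)
    (hmean : ((r : ℝ) - 1) / α ≤ ∑ i, p i) :
    (μ {ω | (∑ i, if Z i ω = true then (1 : ℝ) else 0) ≤ (r : ℝ) - 2}).toReal
      ≤ exp 4 * exp (-(1 / (2 * α))) :=
  stmt7_general μ n p Z hZmeas hZindep hZprob r hr α hα hα4 hmean
end

section
/- Let E be a finite set of edges with values d_e ∈ [0,1], let 0 < α ≤ 1/4, and let C ⊆ E be the random edge set obtained by including each edge e independently with probability min(1, d_e/α). Let t ⊆ E be a subset and r ≥ 2 an integer with Σ_{e ∈ t} d_e ≥ r − 1. Then the probability that t contains fewer than r − 1 edges of C satisfies ℙ(|C ∩ t| < r − 1) ≤ e^4 · exp(−1/(2α)). -/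
open MeasureTheory ProbabilityTheory Real Finset

/-!
The edges `A` of `t` with `d e ≥ α` are selected almost surely, so if `t` has fewer than
`r - 1` selected edges, then among the remaining edges `B` of `t`, each selected with probability `d e / α`, at
most `m = r - 2 - #A` are selected, while their expected number is at least `(m + 1) / α`.
The Chernoff bound at `s = log α` bounds this lower tail by
`α ^ (-m) * exp (-(1 - α) (m + 1) / α) ≤ exp (1 - 1 / α)`,
which is at most `e ^ 4 * exp (-1 / (2 α))`.
-/

lemma card_filter_eq_card_filter_add {ι : Type*} {s : Finset ι} {p q : ι → Prop}
    [DecidablePred p] [DecidablePred q] (h : ∀ i ∈ s, q i → p i) :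
    #(s.filter p) = #(s.filter q) + #((s.filter fun i => ¬ q i).filter p) := by
  rw [← card_filter_add_card_filter_not (s := s.filter p) q, filter_filter, filter_filter,
    filter_filter, filter_congr fun i hi => and_iff_right_of_imp (h i hi)]
  simp only [and_comm]

lemma sub_card_div_le_sum_min_div {ι : Type*} {t : Finset ι} {d : ι → ℝ}
    (hd1 : ∀ e ∈ t, d e ≤ 1) {α c : ℝ} (hα : 0 < α) (hc : c ≤ ∑ e ∈ t, d e) :
    (c - #(t.filter fun e => α ≤ d e)) / α
      ≤ ∑ e ∈ t.filter (fun e => ¬ α ≤ d e), min 1 (d e / α) := by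
  have hsplit := sum_filter_add_sum_filter_not t (fun e => α ≤ d e) d
  have hA : ∑ e ∈ t.filter (fun e => α ≤ d e), d e ≤ #(t.filter fun e => α ≤ d e) := by
    simpa using sum_le_sum fun e (he : e ∈ t.filter _) => hd1 e (mem_filter.mp he).1
  rw [sum_congr rfl fun e he =>
    min_eq_right ((div_le_one hα).mpr (not_le.mp (mem_filter.mp he).2).le), ← sum_div]
  exact div_le_div_of_nonneg_right (by linarith) hα.le

lemma neg_log_mul_add_le_one_sub_inv {α m P : ℝ} (hα : 0 < α) (hα1 : α ≤ 1) (hm : 0 ≤ m)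
    (hP : (m + 1) / α ≤ P) : -log α * m + (α - 1) * P ≤ 1 - 1 / α := by
  have hlog : -log α ≤ 1 / α - 1 := by
    simpa [log_inv, one_div] using log_le_sub_one_of_pos (inv_pos.mpr hα)
  have hdrift : (α - 1) * P ≤ (α - 1) * ((m + 1) / α) :=
    mul_le_mul_of_nonpos_left hP (by linarith)
  calc -log α * m + (α - 1) * P ≤ (1 / α - 1) * m + (α - 1) * ((m + 1) / α) := by
        nlinarith [mul_le_mul_of_nonneg_right hlog hm]
    _ = 1 - 1 / α := by field_simp; ring

lemma exp_one_sub_inv_le {α : ℝ} (hα : 0 < α) :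
    exp (1 - 1 / α) ≤ exp 4 * exp (-(1 / (2 * α))) := by
  rw [← exp_add, exp_le_exp]
  have : 0 < 1 / α := by positivity
  have : 1 / (2 * α) = 1 / α / 2 := by ring
  linarith

section Chernoff

variable {Ω ι : Type*} [MeasurableSpace Ω] {μ : Measure Ω} [IsProbabilityMeasure μ]

lemma ae_of_measureReal_eq_one {s : Set Ω} (hs : MeasurableSet s) (h : μ.real s = 1) :
    ∀ᵐ ω ∂μ, ω ∈ s := by
  rw [ae_mem_iff_measure_eq hs.nullMeasurableSet, measure_univ]
  exact (ENNReal.toReal_eq_one_iff _).mp h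

lemma mgf_ite_true_one_zero {Z : Ω → Bool} (hZ : Measurable Z) (s : ℝ) :
    mgf (fun ω => if Z ω = true then (1 : ℝ) else 0) μ s
      = 1 + μ.real {ω | Z ω = true} * (exp s - 1) := by
  have hmeas : MeasurableSet {ω | Z ω = true} := hZ (measurableSet_singleton true)
  have : (fun ω => exp (s * if Z ω = true then (1 : ℝ) else 0))
      = fun ω => {ω | Z ω = true}.indicator (fun _ => exp s - 1) ω + 1 := by
    funext ω; by_cases h : Z ω = true <;> simp [h]
  rw [mgf, this, integral_add ((integrable_const _).indicator hmeas) (integrable_const 1),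
    integral_indicator_const _ hmeas, integral_const, probReal_univ, smul_eq_mul, smul_eq_mul]
  ring

theorem measureReal_card_filter_le_le_exp {Z : ι → Ω → Bool} (hZ : ∀ i, Measurable (Z i))
    (hindep : iIndepFun Z μ) (B : Finset ι) {s : ℝ} (hs : s ≤ 0) (m : ℝ) :
    μ.real {ω | (#(B.filter fun i => Z i ω = true) : ℝ) ≤ m}
      ≤ exp (-s * m + (exp s - 1) * ∑ i ∈ B, μ.real {ω | Z i ω = true}) := by
  set Y : ι → Ω → ℝ := fun i ω => if Z i ω = true then 1 else 0
  have hY : ∀ i, Measurable (Y i) := fun i =>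
    (measurable_of_countable fun b : Bool => if b = true then (1 : ℝ) else 0).comp (hZ i)
  have hYindep : iIndepFun Y μ :=
    hindep.comp (fun _ b => if b = true then (1 : ℝ) else 0) fun _ => measurable_of_countable _
  have hcount : ∀ ω, (#(B.filter fun i => Z i ω = true) : ℝ) = (∑ i ∈ B, Y i) ω := by
    intro ω; simp [Y, Finset.sum_apply, Finset.sum_boole]
  have hint : Integrable (fun ω => exp (s * (∑ i ∈ B, Y i) ω)) μ := by
    refine .of_bound (by fun_prop) 1 (ae_of_all _ fun ω => ?_)
    rw [norm_of_nonneg (exp_pos _).le, exp_le_one_iff, ← hcount]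
    exact mul_nonpos_of_nonpos_of_nonneg hs (by positivity)
  calc μ.real {ω | (#(B.filter fun i => Z i ω = true) : ℝ) ≤ m}
      = μ.real {ω | (∑ i ∈ B, Y i) ω ≤ m} := by simp_rw [hcount]
    _ ≤ exp (-s * m) * mgf (∑ i ∈ B, Y i) μ s := measure_le_le_exp_mul_mgf m hs hint
    _ = exp (-s * m) * ∏ i ∈ B, (1 + μ.real {ω | Z i ω = true} * (exp s - 1)) := by
        rw [hYindep.mgf_sum hY]
        simp only [Y, mgf_ite_true_one_zero (hZ _)]
    _ ≤ exp (-s * m) * ∏ i ∈ B, exp (μ.real {ω | Z i ω = true} * (exp s - 1)) := by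
        refine mul_le_mul_of_nonneg_left
          (prod_le_prod (fun i _ => ?_) fun i _ => ?_) (exp_pos _).le
        · have hp : μ.real {ω | Z i ω = true} ≤ 1 := measureReal_le_one
          nlinarith [exp_pos s, exp_le_one_iff.mpr hs]
        · linarith [add_one_le_exp (μ.real {ω | Z i ω = true} * (exp s - 1))]
    _ = _ := by rw [← exp_sum, ← exp_add, ← sum_mul, mul_comm (∑ i ∈ B, _)]

/-- The integrality of the count turns `< n - 1` into `≤ n - 2`. -/
lemma measureReal_card_filter_lt_le {Z : ι → Ω → Bool} {t : Finset ι} {q : ι → Prop}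
    [DecidablePred q] (hq : ∀ᵐ ω ∂μ, ∀ i ∈ t.filter q, Z i ω = true) (n : ℕ) :
    μ.real {ω | (#(t.filter fun i => Z i ω = true) : ℝ) < n - 1}
      ≤ μ.real {ω | (#((t.filter fun i => ¬ q i).filter fun i => Z i ω = true) : ℝ)
          ≤ n - 2 - #(t.filter q)} := by
  refine ENNReal.toReal_mono (measure_ne_top _ _) (measure_mono_ae (hq.mono fun ω hω hlt => ?_))
  have hsplit := card_filter_eq_card_filter_add (p := fun i => Z i ω = true)
    fun i hi hqi => hω i (mem_filter.mpr ⟨hi, hqi⟩)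
  have hlt' : (#(t.filter fun i => Z i ω = true) : ℝ) + 1 < n := by
    linarith [show _ < _ from hlt]
  have hn : #(t.filter fun i => Z i ω = true) + 2 ≤ n := by exact_mod_cast hlt'
  have hB : ((#((t.filter fun i => ¬ q i).filter fun i => Z i ω = true) + #(t.filter q) + 2 : ℕ)
      : ℝ) ≤ n := by
    exact_mod_cast (show _ ≤ n by omega)
  push_cast at hB
  show _ ≤ _
  linarith

end Chernoff

theorem stmt8_general {E : Type*} {Ω : Type*} [MeasurableSpace Ω]
    (μ : Measure Ω) [IsProbabilityMeasure μ]
    (d : E → ℝ) (hd1 : ∀ e, d e ≤ 1)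
    (α : ℝ) (hα : 0 < α) (hα4 : α ≤ 1 / 4)
    (Z : E → Ω → Bool)
    (hZmeas : ∀ e, Measurable (Z e))
    (hZindep : iIndepFun Z μ)
    (hZprob : ∀ e, (μ {ω | Z e ω = true}).toReal = min 1 (d e / α))
    (t : Finset E) (r : ℕ) (ht : (r : ℝ) - 1 ≤ ∑ e ∈ t, d e) :
    (μ {ω | ((t.filter fun e => Z e ω = true).card : ℝ) < (r : ℝ) - 1}).toReal
      ≤ exp 4 * exp (-(1 / (2 * α))) := by
  set A := t.filter fun e => α ≤ d e
  set B := t.filter fun e => ¬ α ≤ d e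
  set m : ℝ := (r : ℝ) - 2 - #A
  have hA : ∀ᵐ ω ∂μ, ∀ e ∈ A, Z e ω = true :=
    Filter.eventually_all_finset A |>.mpr fun e he =>
      ae_of_measureReal_eq_one (s := {ω | Z e ω = true}) (hZmeas e (measurableSet_singleton _))
        ((hZprob e).trans (min_eq_left ((one_le_div hα).mpr (mem_filter.mp he).2)))
  have hevent := measureReal_card_filter_lt_le hA r
  have hmass : (m + 1) / α ≤ ∑ e ∈ B, μ.real {ω | Z e ω = true} := by
    simp only [measureReal_def, hZprob]
    convert sub_card_div_le_sum_min_div (fun e _ => hd1 e) hα ht using 2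
    ring
  rcases lt_or_ge m 0 with hm | hm
  · have hempty : {ω | (#(B.filter fun e => Z e ω = true) : ℝ) ≤ m} = ∅ :=
      Set.eq_empty_of_forall_notMem fun ω (h : _ ≤ m) => by
        linarith [(#(B.filter fun e => Z e ω = true)).cast_nonneg (α := ℝ)]
    calc _ ≤ 0 := hevent.trans_eq (by rw [hempty, measureReal_empty])
      _ ≤ _ := by positivity
  · calc _ ≤ _ := hevent
      _ ≤ exp (-log α * m + (exp (log α) - 1) * ∑ e ∈ B, μ.real {ω | Z e ω = true}) :=
          measureReal_card_filter_le_le_exp hZmeas hZindep B (log_nonpos hα.le (by linarith)) m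
      _ ≤ exp (1 - 1 / α) := by
          rw [exp_log hα, exp_le_exp]
          exact neg_log_mul_add_le_one_sub_inv hα (by linarith) hm hmass
      _ ≤ _ := exp_one_sub_inv_le hα

/-- Under randomized rounding with threshold `0 < α ≤ 1/4`, for any `t ⊆ E` with
`Σ_{e ∈ t} d e ≥ r - 1` and integer `r ≥ 2`, the probability that `t` contains fewer
than `r - 1` selected edges is at most `e^4 · exp (-1/(2α))`. -/
theorem stmt8 {E : Type*} [Fintype E] [DecidableEq E] {Ω : Type*} [MeasurableSpace Ω]
    (μ : Measure Ω) [IsProbabilityMeasure μ]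
    (d : E → ℝ) (hd0 : ∀ e, 0 ≤ d e) (hd1 : ∀ e, d e ≤ 1)
    (α : ℝ) (hα : 0 < α) (hα4 : α ≤ 1 / 4)
    (Z : E → Ω → Bool)
    (hZmeas : ∀ e, Measurable (Z e))
    (hZindep : iIndepFun Z μ)
    (hZprob : ∀ e, (μ {ω | Z e ω = true}).toReal = min 1 (d e / α))
    (t : Finset E) (r : ℕ) (hr : 2 ≤ r) (ht : (r : ℝ) - 1 ≤ ∑ e ∈ t, d e) :
    (μ {ω | ((t.filter fun e => Z e ω = true).card : ℝ) < (r : ℝ) - 1}).toReal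
      ≤ exp 4 * exp (-(1 / (2 * α))) :=
  stmt8_general μ d hd1 α hα hα4 Z hZmeas hZindep hZprob t r ht
end

section
/- Let E be a finite set of edges with values d_e ∈ [0,1], let t_1, …, t_σ ⊆ E be σ ≥ 2 subsets (the minimal Steiner trees of the instance) with associated integers r_1, …, r_σ ≥ 2 satisfying Σ_{e ∈ t_j} d_e ≥ r_j − 1 for every j. Let c > 0 be a constant such that α := 1/(c · ln σ) satisfies α ≤ 1/4, and let C ⊆ E be the random edge set obtained by including each edge e independently with probability min(1, d_e/α). Then the probability that some t_j contains fewer than r_j − 1 edges of C is at most e^4 / σ^{c/2 − 1}; equivalently, with probability at least 1 − e^4 · σ^{1 − c/2}, every t_j contains at least r_j − 1 edges of C. -/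
open MeasureTheory ProbabilityTheory Real

/-! Write `L = c ln σ ≥ 4`, so that edge `e` is kept with probability `min 1 (d_e L)` and
`exp (-L/2) ≤ 1/2`. Then the moment generating function at `-L/2` of the number of kept edges
of `t_j` is at most `exp (-(L/2) Σ_{e ∈ t_j} d_e) ≤ exp (-(L/2) (r_j - 1))`. Keeping fewer than
`r_j - 1` edges means keeping at most `r_j - 2`, so the Chernoff bound gives probability at most
`exp (-L/2) = σ^(-c/2)` per tree, and a union bound over the `σ` trees gives `σ^(1 - c/2)`. -/

lemma exp_mul_ite_eq_one_add_indicator {Ω : Type*} (t : ℝ) (Z : Ω → Bool) :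
    (fun ω => exp (t * if Z ω then 1 else 0)) =
      fun ω => 1 + {ω | Z ω = true}.indicator (fun _ => exp t - 1) ω := by
  funext ω
  by_cases h : Z ω <;> simp [h]

section Bernoulli

variable {Ω : Type*} [MeasurableSpace Ω] {μ : Measure Ω}

lemma integrable_exp_mul_ite [IsFiniteMeasure μ] {Z : Ω → Bool} (hZ : Measurable Z) (t : ℝ) :
    Integrable (fun ω => exp (t * if Z ω then 1 else 0)) μ := by
  rw [exp_mul_ite_eq_one_add_indicator]
  exact (integrable_const 1).add
    ((integrable_const _).indicator (hZ (measurableSet_singleton true)))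

lemma mgf_ite [IsProbabilityMeasure μ] {Z : Ω → Bool} (hZ : Measurable Z) (t : ℝ) :
    mgf (fun ω => if Z ω then (1 : ℝ) else 0) μ t =
      1 + μ.real {ω | Z ω = true} * (exp t - 1) := by
  have hA : MeasurableSet {ω | Z ω = true} := hZ (measurableSet_singleton true)
  rw [mgf, exp_mul_ite_eq_one_add_indicator,
    integral_add (integrable_const 1) ((integrable_const _).indicator hA),
    integral_const, integral_indicator_const _ hA]
  simp

theorem measureReal_card_filter_le_le [IsProbabilityMeasure μ] {ι : Type*}
    {Z : ι → Ω → Bool} (hZ : ∀ i, Measurable (Z i)) (hindep : iIndepFun Z μ)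
    (s : Finset ι) {t : ℝ} (ht : t ≤ 0) {m : ι → ℝ}
    (hm : ∀ i ∈ s, 1 + μ.real {ω | Z i ω = true} * (exp t - 1) ≤ exp (t * m i)) (a : ℝ) :
    μ.real {ω | ((s.filter fun i => Z i ω = true).card : ℝ) ≤ a}
      ≤ exp (t * (∑ i ∈ s, m i - a)) := by
  set X : ι → Ω → ℝ := fun i ω => if Z i ω then 1 else 0
  have hX : ∀ i, Measurable (X i) := fun i =>
    (measurable_from_top (f := fun b : Bool => if b then (1 : ℝ) else 0)).comp (hZ i)
  have hXindep : iIndepFun X μ :=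
    hindep.comp (fun _ b => if b then (1 : ℝ) else 0) fun _ => measurable_from_top
  have hcard : ∀ ω, ((s.filter fun i => Z i ω = true).card : ℝ) = (∑ i ∈ s, X i) ω := by
    intro ω
    rw [Finset.card_filter, Finset.sum_apply]
    push_cast
    rfl
  have hint : Integrable (fun ω => exp (t * (∑ i ∈ s, X i) ω)) μ :=
    hXindep.integrable_exp_mul_sum hX fun i _ => integrable_exp_mul_ite (hZ i) t
  have hmgf : mgf (∑ i ∈ s, X i) μ t ≤ exp (t * ∑ i ∈ s, m i) := by
    rw [hXindep.mgf_sum hX, Finset.mul_sum, exp_sum]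
    refine Finset.prod_le_prod (fun i _ => mgf_nonneg) fun i hi => ?_
    rw [mgf_ite (hZ i)]
    exact hm i hi
  simp_rw [hcard]
  calc μ.real {ω | (∑ i ∈ s, X i) ω ≤ a}
      ≤ exp (-t * a) * mgf (∑ i ∈ s, X i) μ t := measure_le_le_exp_mul_mgf a ht hint
    _ ≤ exp (-t * a) * exp (t * ∑ i ∈ s, m i) := by gcongr
    _ = exp (t * (∑ i ∈ s, m i - a)) := by rw [← exp_add]; ring_nf

end Bernoulli

lemma nonneg_of_exp_neg_half_le_half {L : ℝ} (hL : exp (-(L / 2)) ≤ 1 / 2) : 0 ≤ L := by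
  by_contra! h
  linarith [one_lt_exp_iff.mpr (by linarith : 0 < -(L / 2))]

lemma one_add_min_mul_exp_neg_half_sub_one_le {d L : ℝ} (hd0 : 0 ≤ d) (hd1 : d ≤ 1)
    (hL : exp (-(L / 2)) ≤ 1 / 2) :
    1 + min 1 (d * L) * (exp (-(L / 2)) - 1) ≤ exp (-(L / 2) * d) := by
  have hL0 := nonneg_of_exp_neg_half_le_half hL
  rcases le_total 1 (d * L) with h | h
  · rw [min_eq_left h]
    have : exp (-(L / 2)) ≤ exp (-(L / 2) * d) := exp_le_exp.mpr (by nlinarith)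
    linarith
  · -- `exp (-(L/2)) - 1 ≤ -1/2`, so the left side is at most `1 - (L/2) d ≤ exp (-(L/2) d)`
    rw [min_eq_right h]
    have : 0 ≤ d * L := mul_nonneg hd0 hL0
    nlinarith [add_one_le_exp (-(L / 2) * d)]

lemma natCast_le_sub_two_of_lt_sub_one {n r : ℕ} (h : (n : ℝ) < r - 1) :
    (n : ℝ) ≤ r - 2 := by
  have h' : (n : ℤ) < r - 1 := by exact_mod_cast h
  exact_mod_cast (by omega : (n : ℤ) ≤ r - 2)

theorem measureReal_card_filter_lt_sub_one_le {E Ω : Type*} [MeasurableSpace Ω]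
    {μ : Measure Ω} [IsProbabilityMeasure μ] {Z : E → Ω → Bool}
    (hZ : ∀ e, Measurable (Z e)) (hindep : iIndepFun Z μ)
    {d : E → ℝ} (hd0 : ∀ e, 0 ≤ d e) (hd1 : ∀ e, d e ≤ 1)
    {L : ℝ} (hL : exp (-(L / 2)) ≤ 1 / 2)
    (hprob : ∀ e, μ.real {ω | Z e ω = true} = min 1 (d e * L))
    (s : Finset E) (r : ℕ) (hs : (r : ℝ) - 1 ≤ ∑ e ∈ s, d e) :
    μ.real {ω | ((s.filter fun e => Z e ω = true).card : ℝ) < r - 1} ≤ exp (-(L / 2)) := by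
  have hL0 := nonneg_of_exp_neg_half_le_half hL
  calc _ ≤ μ.real {ω | ((s.filter fun e => Z e ω = true).card : ℝ) ≤ r - 2} :=
        measureReal_mono fun _ => natCast_le_sub_two_of_lt_sub_one
    _ ≤ exp (-(L / 2) * (∑ e ∈ s, d e - (r - 2))) := by
        refine measureReal_card_filter_le_le hZ hindep s (by linarith) (fun e _ => ?_) _
        rw [hprob]
        exact one_add_min_mul_exp_neg_half_sub_one_le (hd0 e) (hd1 e) hL
    _ ≤ exp (-(L / 2)) := exp_le_exp.mpr (by nlinarith)

lemma mul_rpow_neg_eq_one_div_rpow_sub_one {x : ℝ} (hx : 0 < x) (y : ℝ) :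
    x * x ^ (-y) = 1 / x ^ (y - 1) := by
  rw [one_div, ← rpow_neg hx.le, neg_sub, sub_eq_add_neg, rpow_add hx, rpow_one]

theorem stmt9_general {E : Type*} {Ω : Type*} [MeasurableSpace Ω]
    (μ : Measure Ω) [IsProbabilityMeasure μ]
    (d : E → ℝ) (hd0 : ∀ e, 0 ≤ d e) (hd1 : ∀ e, d e ≤ 1)
    (σ : ℕ) (hσ : 2 ≤ σ)
    (t : Fin σ → Finset E) (r : Fin σ → ℕ)
    (ht : ∀ j, ((r j : ℝ) - 1) ≤ ∑ e ∈ t j, d e)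
    (c : ℝ) (hc : 0 < c) (α : ℝ) (hα : α = 1 / (c * Real.log σ)) (hα4 : α ≤ 1 / 4)
    (Z : E → Ω → Bool)
    (hZmeas : ∀ e, Measurable (Z e))
    (hZindep : iIndepFun Z μ)
    (hZprob : ∀ e, (μ {ω | Z e ω = true}).toReal = min 1 (d e / α)) :
    (μ {ω | ∃ j, (((t j).filter fun e => Z e ω = true).card : ℝ) < (r j : ℝ) - 1}).toReal
      ≤ exp 4 / (σ : ℝ) ^ (c / 2 - 1) := by
  have hσ1 : (1 : ℝ) < σ := by exact_mod_cast hσ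
  have hσ0 : (0 : ℝ) < σ := by linarith
  set L := c * log σ
  have hL : exp (-(L / 2)) ≤ 1 / 2 := by
    rw [hα, div_le_div_iff₀ (mul_pos hc (log_pos hσ1)) (by norm_num)] at hα4
    linarith [exp_neg_one_lt_half, exp_le_exp.mpr (by linarith : -(L / 2) ≤ -1)]
  have hprob : ∀ e, μ.real {ω | Z e ω = true} = min 1 (d e * L) := fun e => by
    rw [measureReal_def, hZprob, hα, div_div_eq_mul_div, div_one]
  have hexp : exp (-(L / 2)) = (σ : ℝ) ^ (-(c / 2)) := by
    rw [rpow_def_of_pos hσ0, show L = c * log σ from rfl]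
    ring_nf
  rw [← measureReal_def, Set.ofPred_exists]
  calc _ ≤ ∑ j, μ.real {ω | (((t j).filter fun e => Z e ω = true).card : ℝ) < r j - 1} :=
        measureReal_iUnion_fintype_le _
    _ ≤ ∑ _j : Fin σ, (σ : ℝ) ^ (-(c / 2)) := Finset.sum_le_sum fun j _ =>
        hexp ▸ measureReal_card_filter_lt_sub_one_le hZmeas hZindep hd0 hd1 hL hprob
          (t j) (r j) (ht j)
    _ = 1 / (σ : ℝ) ^ (c / 2 - 1) := by
        rw [Finset.sum_const, Finset.card_univ, Fintype.card_fin, nsmul_eq_mul,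
          mul_rpow_neg_eq_one_div_rpow_sub_one hσ0]
    _ ≤ exp 4 / (σ : ℝ) ^ (c / 2 - 1) := by
        gcongr
        exact one_le_exp (by norm_num)

/-- Union bound for randomized rounding: with `σ ≥ 2` minimal Steiner trees
`t_1, …, t_σ`, requirements `r_j ≥ 2` with `Σ_{e ∈ t_j} d e ≥ r_j - 1`, and threshold
`α = 1/(c · ln σ) ≤ 1/4`, the probability that some `t_j` contains fewer than `r_j - 1`
selected edges is at most `e^4 / σ^(c/2 - 1)`. -/
theorem stmt9 {E : Type*} [Fintype E] [DecidableEq E] {Ω : Type*} [MeasurableSpace Ω]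
    (μ : Measure Ω) [IsProbabilityMeasure μ]
    (d : E → ℝ) (hd0 : ∀ e, 0 ≤ d e) (hd1 : ∀ e, d e ≤ 1)
    (σ : ℕ) (hσ : 2 ≤ σ)
    (t : Fin σ → Finset E) (r : Fin σ → ℕ) (hr : ∀ j, 2 ≤ r j)
    (ht : ∀ j, ((r j : ℝ) - 1) ≤ ∑ e ∈ t j, d e)
    (c : ℝ) (hc : 0 < c) (α : ℝ) (hα : α = 1 / (c * Real.log σ)) (hα4 : α ≤ 1 / 4)
    (Z : E → Ω → Bool)
    (hZmeas : ∀ e, Measurable (Z e))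
    (hZindep : iIndepFun Z μ)
    (hZprob : ∀ e, (μ {ω | Z e ω = true}).toReal = min 1 (d e / α)) :
    (μ {ω | ∃ j, (((t j).filter fun e => Z e ω = true).card : ℝ) < (r j : ℝ) - 1}).toReal
      ≤ exp 4 / (σ : ℝ) ^ (c / 2 - 1) :=
  stmt9_general μ d hd0 hd1 σ hσ t r ht c hc α hα hα4 Z hZmeas hZindep hZprob
end

section
/- Let 0 < α ≤ 1/4. Then the function f_α(x) = exp(−(x − 1 − α(x + 2))²/(2α(x − 1))) is antitone (non-increasing) on the interval [2, ∞). -/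
open Real Set

/-- For `0 < α ≤ 1/4`, the function
`x ↦ exp (-(x - 1 - α(x + 2))^2 / (2α(x - 1)))` is antitone on `[2, ∞)`. -/
theorem stmt11 (α : ℝ) (hα : 0 < α) (hα4 : α ≤ 1 / 4) :
    AntitoneOn
      (fun x : ℝ => exp (-(x - 1 - α * (x + 2)) ^ 2 / (2 * α * (x - 1)))) (Ici 2) := by
  intro x hx y hy hxy
  simp only [mem_Ici] at hx hy
  have hdx : (0:ℝ) < 2 * α * (x - 1) := by nlinarith
  have hdy : (0:ℝ) < 2 * α * (y - 1) := by nlinarith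
  rw [Real.exp_le_exp, div_le_div_iff₀ hdy hdx]
  have h1 : (9:ℝ) * α^2 ≤ (1 - α)^2 := by nlinarith
  have h2 : (1:ℝ) ≤ (x - 1) * (y - 1) := by nlinarith
  have key : 0 ≤ (1 - α)^2 * (x - 1) * (y - 1) - 9 * α^2 := by
    nlinarith [mul_le_mul_of_nonneg_left h2 (sq_nonneg (1 - α))]
  nlinarith [mul_nonneg (mul_nonneg (sub_nonneg.mpr hxy) key) hα.le]
end

section
/- Let m ≥ 1 be an integer and let a_1, …, a_m, b_1, …, b_m, d be positive integers satisfying b_1 = 1, b_{i+1} ≤ a_i + b_i for all 1 ≤ i < m, and d ≤ a_m + b_m. For each i define c_i = Σ_{j=1}^{i−1} a_j (so c_1 = 0). Then Σ_{i=1}^{m} (a_i/(a_i + b_i)) · (∏_{j=1}^{i−1} b_j/(a_j + b_j)) · (b_i + c_i) + (∏_{i=1}^{m} b_i/(a_i + b_i)) · (a_m + c_m + d) ≤ 2m + 2. (This quantity is the expected distortion 𝔼[dist_𝒯(u,v)] of an edge (u,v) in the spanning tree 𝒯 produced by Emek and Peleg's Construct_Tree algorithm on a series-parallel graph whose composition trace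 has depth m, so the expected distortion of every edge is O(m).) -/
/-!
Write `P i = ∏_{j<i} b_j / (a_j + b_j)` and `E(m, d)` for the left-hand side. Dropping the last
level and putting the poles at distance `b_{m+1}` instead changes the value by exactly
`P_{m+1} b_{m+1} (a_{m+1} + d - b_{m+1}) / (a_{m+1} + b_{m+1}) ≤ 2 P_{m+1} b_{m+1}`.
The growth condition `b_{j+1} ≤ a_j + b_j` makes `P_i b_i` non-increasing, so each level costs at
most `2 b_1 = 2`; together with `E(1, d) ≤ 3` this gives `E(m, d) ≤ 2m + 1`.
-/

open Finset

namespace EmekPeleg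

variable (a b : ℕ → ℝ)

noncomputable def survivalProb (i : ℕ) : ℝ :=
  ∏ j ∈ Ico 1 i, b j / (a j + b j)

noncomputable def expectedTreeDist (m : ℕ) (d : ℝ) : ℝ :=
  (∑ i ∈ Icc 1 m, a i / (a i + b i) * survivalProb a b i * (b i + ∑ j ∈ Ico 1 i, a j)) +
    survivalProb a b (m + 1) * (a m + ∑ j ∈ Ico 1 m, a j + d)

variable {a b}

theorem survivalProb_succ {i : ℕ} (hi : 1 ≤ i) :
    survivalProb a b (i + 1) = survivalProb a b i * (b i / (a i + b i)) :=
  prod_Ico_succ_top hi _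

theorem survivalProb_nonneg (ha : ∀ j, 0 ≤ a j) (hb : ∀ j, 0 ≤ b j) (i : ℕ) :
    0 ≤ survivalProb a b i :=
  prod_nonneg fun j _ => div_nonneg (hb j) (add_nonneg (ha j) (hb j))

theorem survivalProb_mul_le (ha : ∀ j, 0 ≤ a j) (hb : ∀ j, 0 ≤ b j) {i : ℕ} (hi : 1 ≤ i)
    (hgrow : ∀ j, 1 ≤ j → j < i → b (j + 1) ≤ a j + b j) :
    survivalProb a b i * b i ≤ b 1 := by
  induction i, hi using Nat.le_induction with
  | base => simp [survivalProb]
  | succ n hn ih =>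
    have hstep : b n / (a n + b n) * b (n + 1) ≤ b n := by
      rw [div_mul_eq_mul_div]
      exact div_le_of_le_mul₀ (add_nonneg (ha n) (hb n)) (hb n)
        (mul_le_mul_of_nonneg_left (hgrow n hn n.lt_succ_self) (hb n))
    calc survivalProb a b (n + 1) * b (n + 1)
        = survivalProb a b n * (b n / (a n + b n) * b (n + 1)) := by
          rw [survivalProb_succ hn, mul_assoc]
      _ ≤ survivalProb a b n * b n :=
          mul_le_mul_of_nonneg_left hstep (survivalProb_nonneg ha hb n)
      _ ≤ b 1 := ih fun j hj hjn => hgrow j hj (hjn.trans n.lt_succ_self)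

theorem expectedTreeDist_one (d : ℝ) (hb : 0 ≤ b 1) (hs : 0 < a 1 + b 1)
    (hd : d ≤ a 1 + b 1) : expectedTreeDist a b 1 d ≤ 3 * b 1 := by
  rw [expectedTreeDist, survivalProb_succ le_rfl]
  simp only [survivalProb, Icc_self, Ico_self, sum_singleton, sum_empty, prod_empty, one_mul,
    mul_one, add_zero]
  rw [div_mul_eq_mul_div, div_mul_eq_mul_div, ← add_div, div_le_iff₀ hs]
  nlinarith [mul_nonneg hb (sub_nonneg.2 hd), mul_nonneg hb hb]

theorem expectedTreeDist_succ {n : ℕ} (hn : 1 ≤ n) (d : ℝ) (hs : a (n + 1) + b (n + 1) ≠ 0) :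
    expectedTreeDist a b (n + 1) d = expectedTreeDist a b n (b (n + 1)) +
      survivalProb a b (n + 1) * b (n + 1) * (a (n + 1) + d - b (n + 1)) /
        (a (n + 1) + b (n + 1)) := by
  simp only [expectedTreeDist, sum_Icc_succ_top (by omega : 1 ≤ n + 1),
    survivalProb_succ (by omega : 1 ≤ n + 1), sum_Ico_succ_top hn]
  field_simp
  ring

theorem expectedTreeDist_le (ha : ∀ j, 0 ≤ a j) (hb : ∀ j, 0 ≤ b j) {m : ℕ} (hm : 1 ≤ m)
    (hs : ∀ i, 1 ≤ i → i ≤ m → 0 < a i + b i)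
    (hgrow : ∀ j, 1 ≤ j → j < m → b (j + 1) ≤ a j + b j) {d : ℝ} (hd : d ≤ a m + b m) :
    expectedTreeDist a b m d ≤ (2 * m + 1) * b 1 := by
  induction m, hm using Nat.le_induction generalizing d with
  | base =>
    exact (expectedTreeDist_one d (hb 1) (hs 1 le_rfl le_rfl) hd).trans_eq (by norm_num)
  | succ n hn ih =>
    have hsn := hs (n + 1) (by omega) le_rfl
    have hincr : survivalProb a b (n + 1) * b (n + 1) * (a (n + 1) + d - b (n + 1)) /
        (a (n + 1) + b (n + 1)) ≤ 2 * b 1 := by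
      rw [div_le_iff₀ hsn]
      calc survivalProb a b (n + 1) * b (n + 1) * (a (n + 1) + d - b (n + 1))
          ≤ survivalProb a b (n + 1) * b (n + 1) * (2 * (a (n + 1) + b (n + 1))) := by
            gcongr
            · exact mul_nonneg (survivalProb_nonneg ha hb _) (hb _)
            · linarith [ha (n + 1), hb (n + 1)]
        _ ≤ b 1 * (2 * (a (n + 1) + b (n + 1))) := by
            gcongr; exact survivalProb_mul_le ha hb (by omega) hgrow
        _ = 2 * b 1 * (a (n + 1) + b (n + 1)) := by ring
    rw [expectedTreeDist_succ hn d hsn.ne']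
    have hprev := ih (fun i hi hin => hs i hi (by omega)) (fun j hj hjn => hgrow j hj (by omega))
      (hgrow n hn n.lt_succ_self)
    push_cast
    linarith

end EmekPeleg

open EmekPeleg in
theorem stmt16_general (m : ℕ) (hm : 1 ≤ m) (a b : ℕ → ℕ) (d : ℕ)
    (ha : ∀ i, 1 ≤ i → i ≤ m → 0 < a i)
    (hb1 : b 1 = 1)
    (hbi : ∀ i, 1 ≤ i → i < m → b (i + 1) ≤ a i + b i)
    (hdm : d ≤ a m + b m) :
    (∑ i ∈ Icc 1 m,
        ((a i : ℝ) / ((a i : ℝ) + (b i : ℝ))) *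
          (∏ j ∈ Ico 1 i, (b j : ℝ) / ((a j : ℝ) + (b j : ℝ))) *
          ((b i : ℝ) + ∑ j ∈ Ico 1 i, (a j : ℝ))) +
      (∏ i ∈ Icc 1 m, (b i : ℝ) / ((a i : ℝ) + (b i : ℝ))) *
        ((a m : ℝ) + (∑ j ∈ Ico 1 m, (a j : ℝ)) + (d : ℝ))
      ≤ 2 * (m : ℝ) + 2 := by
  have hbound := expectedTreeDist_le (a := fun i => (a i : ℝ)) (b := fun i => (b i : ℝ))
    (fun j => (a j).cast_nonneg) (fun j => (b j).cast_nonneg) hm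
    (fun i hi him => by exact_mod_cast Nat.add_pos_left (ha i hi him) _)
    (fun j hj hjm => by exact_mod_cast hbi j hj hjm) (d := d) (by exact_mod_cast hdm)
  simp only [expectedTreeDist, survivalProb, Ico_add_one_right_eq_Icc, hb1, Nat.cast_one,
    mul_one] at hbound
  linarith

/-- Emek–Peleg expected distortion bound: with positive integers `a_1, …, a_m`,
`b_1, …, b_m`, `d` satisfying `b 1 = 1`, `b (i+1) ≤ a i + b i` for `1 ≤ i < m`, and
`d ≤ a m + b m`, setting `c i = Σ_{j=1}^{i-1} a j`, the expected distortion expression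
is at most `2m + 2`. -/
theorem stmt16 (m : ℕ) (hm : 1 ≤ m) (a b : ℕ → ℕ) (d : ℕ)
    (ha : ∀ i, 1 ≤ i → i ≤ m → 0 < a i)
    (hb : ∀ i, 1 ≤ i → i ≤ m → 0 < b i)
    (hd : 0 < d)
    (hb1 : b 1 = 1)
    (hbi : ∀ i, 1 ≤ i → i < m → b (i + 1) ≤ a i + b i)
    (hdm : d ≤ a m + b m) :
    (∑ i ∈ Icc 1 m,
        ((a i : ℝ) / ((a i : ℝ) + (b i : ℝ))) *
          (∏ j ∈ Ico 1 i, (b j : ℝ) / ((a j : ℝ) + (b j : ℝ))) *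
          ((b i : ℝ) + ∑ j ∈ Ico 1 i, (a j : ℝ))) +
      (∏ i ∈ Icc 1 m, (b i : ℝ) / ((a i : ℝ) + (b i : ℝ))) *
        ((a m : ℝ) + (∑ j ∈ Ico 1 m, (a j : ℝ)) + (d : ℝ))
      ≤ 2 * (m : ℝ) + 2 :=
  stmt16_general m hm a b d ha hb1 hbi hdm
end
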